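/- Let X : [0,1] → ℝ be a centered stochastic process whose covariance R(s,t) = E(X_s X_t) has finite ρ-variation in the sense that for every interval [s,t] and partition s = t_0 < ... < t_n = t, Σ_{i,j} |E(X_{t_{i-1},t_i} X_{t_{j-1},t_j})|^ρ ≤ C|t−s|. Then for all p ≥ 1 and all M ≤ N ≤ 2^p, the Schauder coefficients X_{pm} = 2X(t^1_{pm}) − X(t^0_{pm}) − X(t^2_{pm}) satisfy Σ_{m_1,m_2=M}^{N} |E(X_{pm_1} X_{pm_2})|^ρ ≲ (N − M + 1) 2^{-p}. -/

import Mathlib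

/-!
The Schauder coefficient `X_{pm}` is the increment of `X` over the left half of
`[t⁰_{pm}, t²_{pm}]` minus the increment over the right half. Hence `E(X_{pm₁} X_{pm₂})` is a
signed sum of four covariances of increments over the partition of `[(M-1)2^{-p}, N2^{-p}]` into
`2(N-M+1)` intervals of length `2^{-(p+1)}`. Convexity of `x ↦ x^ρ` gives
`|a - b - c + d|^ρ ≤ 4^{ρ-1}(|a|^ρ + |b|^ρ + |c|^ρ + |d|^ρ)`, and summing over `m₁, m₂` the
right-hand sides add up to `4^{ρ-1}` times the `ρ`-variation sum of that partition, which is at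
most `C (N-M+1) 2^{-p}`.
-/

noncomputable section
open Set MeasureTheory

/-- The Schauder coefficient process `X_{pm} = 2X(t¹_{pm}) - X(t⁰_{pm}) - X(t²_{pm})`. -/
def scoeff {Ω : Type*} (X : ℝ → Ω → ℝ) (p m : ℕ) (ω : Ω) : ℝ :=
  2 * X ((2 * (m : ℝ) - 1) / 2 ^ (p + 1)) ω - X (((m : ℝ) - 1) / 2 ^ p) ω -
    X ((m : ℝ) / 2 ^ p) ω

theorem abs_sub_sub_add_rpow_le {ρ : ℝ} (hρ : 1 ≤ ρ) (w x y z : ℝ) :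
    |w - x - y + z| ^ ρ ≤ 4 ^ (ρ - 1) * (|w| ^ ρ + |x| ^ ρ + |y| ^ ρ + |z| ^ ρ) := by
  set f : Fin 4 → ℝ := ![w, -x, -y, z]
  calc |w - x - y + z| ^ ρ = |∑ i, f i| ^ ρ := by simp [f, Fin.sum_univ_four, sub_eq_add_neg]
    _ ≤ (∑ i, |f i|) ^ ρ := by gcongr; exact Finset.abs_sum_le_sum_abs _ _
    _ ≤ (Finset.univ.card : ℝ) ^ (ρ - 1) * ∑ i, |f i| ^ ρ :=
        Real.rpow_sum_le_const_mul_sum_rpow _ _ hρ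
    _ = _ := by simp [f, Fin.sum_univ_four]

section Covariance

variable {Ω : Type*} [MeasurableSpace Ω] {P : Measure Ω} {A B A' B' : Ω → ℝ}

theorem integral_sub_mul_sub (hA : MemLp A 2 P) (hB : MemLp B 2 P) (hA' : MemLp A' 2 P)
    (hB' : MemLp B' 2 P) :
    ∫ ω, (A ω - B ω) * (A' ω - B' ω) ∂P
      = ∫ ω, A ω * A' ω ∂P - ∫ ω, A ω * B' ω ∂P - ∫ ω, B ω * A' ω ∂P + ∫ ω, B ω * B' ω ∂P := by
  have hint : ∀ {f g : Ω → ℝ}, MemLp f 2 P → MemLp g 2 P → Integrable (fun ω ↦ f ω * g ω) P :=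
    fun hf hg ↦ hf.integrable_mul hg
  simp_rw [sub_mul, mul_sub]
  rw [integral_sub, integral_sub, integral_sub]
  · ring
  exacts [hint hB hA', hint hB hB', hint hA hA', hint hA hB', (hint hA hA').sub (hint hA hB'),
    (hint hB hA').sub (hint hB hB')]

theorem abs_integral_sub_mul_sub_rpow_le {ρ : ℝ} (hρ : 1 ≤ ρ) (hA : MemLp A 2 P)
    (hB : MemLp B 2 P) (hA' : MemLp A' 2 P) (hB' : MemLp B' 2 P) :
    |∫ ω, (A ω - B ω) * (A' ω - B' ω) ∂P| ^ ρ
      ≤ 4 ^ (ρ - 1) * (|∫ ω, A ω * A' ω ∂P| ^ ρ + |∫ ω, A ω * B' ω ∂P| ^ ρ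
        + |∫ ω, B ω * A' ω ∂P| ^ ρ + |∫ ω, B ω * B' ω ∂P| ^ ρ) := by
  rw [integral_sub_mul_sub hA hB hA' hB']
  exact abs_sub_sub_add_rpow_le hρ _ _ _ _

end Covariance

theorem sum_Icc_one_two_mul {M : Type*} [AddCommMonoid M] (g : ℕ → M) (K : ℕ) :
    ∑ i ∈ Finset.Icc 1 (2 * K), g i = ∑ k ∈ Finset.range K, (g (2 * k + 1) + g (2 * k + 2)) := by
  induction K with
  | zero => simp
  | succ K ih =>
    rw [Finset.sum_range_succ, ← ih, show 2 * (K + 1) = 2 * K + 1 + 1 by ring,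
      Finset.sum_Icc_succ_top (by omega), Finset.sum_Icc_succ_top (by omega), add_assoc]

theorem sum_Icc_one_two_mul_sq {M : Type*} [AddCommMonoid M] (F : ℕ → ℕ → M) (K : ℕ) :
    ∑ i ∈ Finset.Icc 1 (2 * K), ∑ j ∈ Finset.Icc 1 (2 * K), F i j
      = ∑ k₁ ∈ Finset.range K, ∑ k₂ ∈ Finset.range K,
          (F (2 * k₁ + 1) (2 * k₂ + 1) + F (2 * k₁ + 1) (2 * k₂ + 2)
            + F (2 * k₁ + 2) (2 * k₂ + 1) + F (2 * k₁ + 2) (2 * k₂ + 2)) := by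
  simp_rw [sum_Icc_one_two_mul, ← Finset.sum_add_distrib]
  refine Finset.sum_congr rfl fun k₁ _ ↦ Finset.sum_congr rfl fun k₂ _ ↦ ?_
  abel

theorem sum_rpow_integral_pairDiff_le {Ω : Type*} [MeasurableSpace Ω] {P : Measure Ω} {ρ : ℝ}
    (hρ : 1 ≤ ρ) (Y : ℕ → Ω → ℝ) (K : ℕ) (hY : ∀ i ∈ Finset.Icc 1 (2 * K), MemLp (Y i) 2 P) :
    ∑ k₁ ∈ Finset.range K, ∑ k₂ ∈ Finset.range K,
        |∫ ω, (Y (2 * k₁ + 1) ω - Y (2 * k₁ + 2) ω) * (Y (2 * k₂ + 1) ω - Y (2 * k₂ + 2) ω) ∂P| ^ ρ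
      ≤ 4 ^ (ρ - 1) * ∑ i ∈ Finset.Icc 1 (2 * K), ∑ j ∈ Finset.Icc 1 (2 * K),
          |∫ ω, Y i ω * Y j ω ∂P| ^ ρ := by
  have hY' : ∀ k ∈ Finset.range K, MemLp (Y (2 * k + 1)) 2 P ∧ MemLp (Y (2 * k + 2)) 2 P := by
    intro k hk
    rw [Finset.mem_range] at hk
    exact ⟨hY _ (Finset.mem_Icc.2 ⟨by omega, by omega⟩),
      hY _ (Finset.mem_Icc.2 ⟨by omega, by omega⟩)⟩
  rw [sum_Icc_one_two_mul_sq]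
  simp_rw [Finset.mul_sum]
  gcongr with k₁ hk₁ k₂ hk₂
  exact abs_integral_sub_mul_sub_rpow_le hρ (hY' k₁ hk₁).1 (hY' k₁ hk₁).2 (hY' k₂ hk₂).1
    (hY' k₂ hk₂).2

/-- The points `(L + i/2) 2^{-p}`; for `m = L + 1 + k` they give `t⁰_{pm}, t¹_{pm}, t²_{pm}` at
`i = 2k, 2k + 1, 2k + 2`. -/
def halfDyadicGrid (p L i : ℕ) : ℝ := ((2 * L + i : ℕ) : ℝ) / 2 ^ (p + 1)

theorem halfDyadicGrid_mono (p L : ℕ) : Monotone (halfDyadicGrid p L) :=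
  fun _ _ hij ↦ by unfold halfDyadicGrid; gcongr

theorem halfDyadicGrid_mem_Icc {p L i : ℕ} (h : 2 * L + i ≤ 2 ^ (p + 1)) :
    halfDyadicGrid p L i ∈ Icc (0 : ℝ) 1 :=
  ⟨by unfold halfDyadicGrid; positivity, (div_le_one (by positivity)).2 (mod_cast h)⟩

theorem halfDyadicGrid_two_mul_sub_zero (p L K : ℕ) :
    halfDyadicGrid p L (2 * K) - halfDyadicGrid p L 0 = K * (2 : ℝ) ^ (-(p : ℤ)) := by
  unfold halfDyadicGrid
  push_cast
  rw [zpow_neg, zpow_natCast, pow_succ]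
  field_simp
  ring

theorem scoeff_eq_sub_halfDyadicGrid {Ω : Type*} (X : ℝ → Ω → ℝ) (p L k : ℕ) (ω : Ω) :
    scoeff X p (L + 1 + k) ω
      = (X (halfDyadicGrid p L (2 * k + 1)) ω - X (halfDyadicGrid p L (2 * k)) ω)
        - (X (halfDyadicGrid p L (2 * k + 2)) ω - X (halfDyadicGrid p L (2 * k + 1)) ω) := by
  have h0 : (((L + 1 + k : ℕ) : ℝ) - 1) / 2 ^ p = halfDyadicGrid p L (2 * k) := by
    unfold halfDyadicGrid; push_cast; rw [pow_succ]; field_simp; ring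
  have h1 : (2 * ((L + 1 + k : ℕ) : ℝ) - 1) / 2 ^ (p + 1) = halfDyadicGrid p L (2 * k + 1) := by
    unfold halfDyadicGrid; push_cast; ring
  have h2 : ((L + 1 + k : ℕ) : ℝ) / 2 ^ p = halfDyadicGrid p L (2 * k + 2) := by
    unfold halfDyadicGrid; push_cast; rw [pow_succ]; field_simp; ring
  rw [scoeff, h0, h1, h2]
  ring

/-- If the covariance of a centered process `X` has finite `ρ`-variation in the sense that
`∑_{i,j} |E(X_{t_{i-1},t_i} X_{t_{j-1},t_j})|^ρ ≤ C|t-s|` for every partition of every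
interval `[s,t] ⊆ [0,1]`, then the Schauder coefficients of generation `p` satisfy
`∑_{m₁,m₂=M}^{N} |E(X_{pm₁} X_{pm₂})|^ρ ≲ (N-M+1) 2^{-p}`. -/
theorem rho_variation_dyadic_generation (ρ : ℝ) (hρ : 1 ≤ ρ) :
    ∃ D > (0:ℝ), ∀ (Ω : Type) (_ : MeasurableSpace Ω) (P : Measure Ω),
      IsProbabilityMeasure P →
      ∀ (X : ℝ → Ω → ℝ) (C : ℝ), 0 ≤ C →
      (∀ t ∈ Icc (0:ℝ) 1, MemLp (X t) 2 P) →
      (∀ t ∈ Icc (0:ℝ) 1, ∫ ω, X t ω ∂P = 0) →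
      -- (ρ-var): finite ρ-variation of the covariance
      (∀ s ∈ Icc (0:ℝ) 1, ∀ t ∈ Icc (0:ℝ) 1, s ≤ t →
        ∀ (n : ℕ) (u : ℕ → ℝ), u 0 = s → u n = t → (∀ i < n, u i ≤ u (i + 1)) →
          ∑ i ∈ Finset.Icc 1 n, ∑ j ∈ Finset.Icc 1 n,
            |∫ ω, (X (u i) ω - X (u (i - 1)) ω) * (X (u j) ω - X (u (j - 1)) ω) ∂P| ^ ρ
              ≤ C * (t - s)) →
      ∀ p : ℕ, 1 ≤ p → ∀ M N : ℕ, 1 ≤ M → M ≤ N → N ≤ 2 ^ p →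
        ∑ m₁ ∈ Finset.Icc M N, ∑ m₂ ∈ Finset.Icc M N,
          |∫ ω, scoeff X p m₁ ω * scoeff X p m₂ ω ∂P| ^ ρ
            ≤ D * C * ((N : ℝ) - M + 1) * (2 : ℝ) ^ (-(p : ℤ)) := by
  refine ⟨4 ^ (ρ - 1), by positivity, ?_⟩
  intro Ω _ P _ X C _ hL2 _ hvar p _ M N hM hMN hN
  obtain ⟨L, rfl⟩ : ∃ L, M = L + 1 := ⟨M - 1, by omega⟩
  set K := N - L
  set u := halfDyadicGrid p L
  have hmono : Monotone u := halfDyadicGrid_mono p L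
  set Y : ℕ → Ω → ℝ := fun i ω ↦ X (u i) ω - X (u (i - 1)) ω
  have hu : ∀ i ≤ 2 * K, u i ∈ Icc (0 : ℝ) 1 := fun i hi ↦
    halfDyadicGrid_mem_Icc (by rw [pow_succ]; omega)
  have hscoeff (k : ℕ) : scoeff X p (L + 1 + k) = fun ω ↦ Y (2 * k + 1) ω - Y (2 * k + 2) ω :=
    funext fun ω ↦ scoeff_eq_sub_halfDyadicGrid X p L k ω
  calc ∑ m₁ ∈ Finset.Icc (L + 1) N, ∑ m₂ ∈ Finset.Icc (L + 1) N,
        |∫ ω, scoeff X p m₁ ω * scoeff X p m₂ ω ∂P| ^ ρ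
      = ∑ k₁ ∈ Finset.range K, ∑ k₂ ∈ Finset.range K,
          |∫ ω, (Y (2 * k₁ + 1) ω - Y (2 * k₁ + 2) ω)
            * (Y (2 * k₂ + 1) ω - Y (2 * k₂ + 2) ω) ∂P| ^ ρ := by
        simp only [← Finset.Ico_add_one_right_eq_Icc, Finset.sum_Ico_eq_sum_range, hscoeff,
          Nat.add_sub_add_right, K]
    _ ≤ 4 ^ (ρ - 1) * ∑ i ∈ Finset.Icc 1 (2 * K), ∑ j ∈ Finset.Icc 1 (2 * K),
          |∫ ω, Y i ω * Y j ω ∂P| ^ ρ :=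
        sum_rpow_integral_pairDiff_le hρ Y K fun i hi ↦ by
          obtain ⟨-, hi⟩ := Finset.mem_Icc.1 hi
          exact (hL2 _ (hu i hi)).sub (hL2 _ (hu _ (by omega)))
    _ ≤ 4 ^ (ρ - 1) * (C * (u (2 * K) - u 0)) := by
        gcongr
        exact hvar _ (hu 0 (Nat.zero_le _)) _ (hu _ le_rfl) (hmono (Nat.zero_le _)) _ u rfl rfl
          fun i _ ↦ hmono i.le_succ
    _ = 4 ^ (ρ - 1) * C * ((N : ℝ) - (L + 1 : ℕ) + 1) * (2 : ℝ) ^ (-(p : ℤ)) := by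
        rw [halfDyadicGrid_two_mul_sub_zero, Nat.cast_sub (by omega : L ≤ N)]
        push_cast
        ring
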